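/- (Claim 4.6.) There is an absolute constant c > 0 such that for every deterministic dynamic retrieval scheme (F, G, Query) in the model and every real S ≥ H(F): if i is drawn uniformly from {1, …, n/2}, independently of the process, then the expected size of the plausible set satisfies E_{i, A, R_A, R_{B₀}}[ |P_i(F(A, R_A, R_{B₀}))| ] ≥ ((u − n/2)/(n/2)) · 2^{−(2S − 2nv)/n − c}. -/

import Mathlib

noncomputable section

namespace DynRetrieval

/-! ### Entropy on a finite sample space with the uniform distribution -/

/-- The probability of an event `s` under the uniform distribution on a finite type `Ω`. -/
def unifPr (Ω : Type*) [Fintype Ω] (s : Set Ω) : ℝ :=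
  (Nat.card s : ℝ) / (Fintype.card Ω : ℝ)

/-- The Shannon entropy (in bits) of a random variable `X` defined on a finite sample
space `Ω` carrying the uniform distribution. -/
def entropy {Ω : Type*} {α : Type*} [Fintype Ω] (X : Ω → α) : ℝ :=
  (∑ ω : Ω, -Real.logb 2 (unifPr Ω {ω' | X ω' = X ω})) / (Fintype.card Ω : ℝ)

/-- The conditional Shannon entropy `H(X | Y) = H(X, Y) − H(Y)` (in bits). -/
def condEntropy {Ω : Type*} {α β : Type*} [Fintype Ω] (X : Ω → α) (Y : Ω → β) : ℝ :=
  entropy (fun ω => (X ω, Y ω)) - entropy Y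

/-- The first bit of a `v`-bit string. -/
def firstBit {v : ℕ} (r : Fin v → Bool) : Bool :=
  if h : 0 < v then r ⟨0, h⟩ else false

/-! ### The dynamic random process

Parameters `n v u`, with `n` even, `u ≥ n³`, and `u − n/2` divisible by `n/2`.
The set `[u] \ [n/2]` is split into `n/2` consecutive parts, each of size
`2u/n − 1 = (u − n/2)/(n/2)`.  An element of the `i`-th part is identified by its
position `a` inside the part; as a (0-indexed) natural number it is the key
`n/2 + i·((u − n/2)/(n/2)) + a`.  The keys `0, …, n/2 − 1` form the set `B₀`. -/

variable (n v u : ℕ)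

/-- The number of parts, `n/2`. -/
def K : ℕ := n / 2

/-- The size of each part, `(u − n/2)/(n/2) = 2u/n − 1`. -/
def W : ℕ := (u - n / 2) / (n / 2)

/-- The key (element of `[u] \ [n/2]`, 0-indexed) at position `a` of part `i`. -/
def key (i : Fin (K n)) (a : Fin (W n u)) : ℕ := n / 2 + (i : ℕ) * W n u + (a : ℕ)

/-- The model hypotheses on the parameters: `n` even with `n ≥ 4`, `v ≥ 1`, `u ≥ n³`,
and `u − n/2` divisible by `n/2`. -/
def Hyp : Prop :=
  n % 2 = 0 ∧ 4 ≤ n ∧ 1 ≤ v ∧ n ^ 3 ≤ u ∧ n / 2 ∣ (u - n / 2)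

/-- Raw data of a realization of the first stage of the process: `(A, R_A, R_{B₀})`.
`A i` is (the position of) the element of `A` in part `i`, `R_A i` its `v`-bit value, and
`R_{B₀} i` the `v`-bit value of the key `i ∈ B₀ = {0, …, n/2 − 1}`. -/
abbrev FData : Type :=
  (Fin (K n) → Fin (W n u)) × (Fin (K n) → Fin v → Bool) × (Fin (K n) → Fin v → Bool)

/-- Validity of a realization `(A, R_A, R_{B₀})`: every value of `R_A` has first bit `1`
(`A` and `R_{B₀}` are unconstrained). -/
def ValidF (d : FData n v u) : Prop := ∀ j, firstBit (d.2.1 j) = true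

/-- Raw data of a full realization of the dynamic random process:
`((A, R_A, R_{B₀}), (B, R_B))`. -/
abbrev DynData : Type :=
  FData n v u × ((Fin (K n) → Fin (W n u)) × (Fin (K n) → Fin v → Bool))

/-- Validity of a full realization: `R_A` has first bits `1`, `B` avoids `A` in each
part, and `R_B` has first bits `0`. -/
def DynValid (d : DynData n v u) : Prop :=
  ValidF n v u d.1 ∧ (∀ j, d.2.1 j ≠ d.1.1 j) ∧ ∀ j, firstBit (d.2.2 j) = false

/-- The sample space of the dynamic random process: since every random choice in the
process is uniform (subject to the stated constraints, whose number of options does not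
depend on the previous choices), the joint distribution of `(A, R_A, R_{B₀}, B, R_B)` is
the uniform distribution on the set of valid realizations. -/
abbrev DynOmega : Type := {d : DynData n v u // DynValid n v u d}

noncomputable instance : Fintype (DynOmega n v u) := Fintype.ofFinite _

/-- The type of the (deterministic) map `F`, building a bit string from a realization of
`(A, R_A, R_{B₀})`. -/
abbrev FBuilder : Type :=
  (Fin (K n) → Fin (W n u)) → (Fin (K n) → Fin v → Bool) →
    (Fin (K n) → Fin v → Bool) → List Bool

/-- The type of the (deterministic) map `G`, building a bit string from a bit string
together with a realization of `(B, R_B)`. -/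
abbrev GBuilder : Type :=
  List Bool → (Fin (K n) → Fin (W n u)) → (Fin (K n) → Fin v → Bool) → List Bool

/-- The type of the (deterministic) query map: a bit string and a key give a `v`-bit
value. -/
abbrev QueryFn (v : ℕ) : Type := List Bool → ℕ → Fin v → Bool

/-- The random bit string `F = F(A, R_A, R_{B₀})`. -/
def Frv (F : FBuilder n v u) (ω : DynOmega n v u) : List Bool :=
  F ω.1.1.1 ω.1.1.2.1 ω.1.1.2.2

/-- The random bit string `G = G(F(A, R_A, R_{B₀}), B, R_B)`. -/
def Grv (F : FBuilder n v u) (G : GBuilder n v u) (ω : DynOmega n v u) : List Bool :=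
  G (Frv n v u F ω) ω.1.2.1 ω.1.2.2

/-- The random variable `B`. -/
def Brv (ω : DynOmega n v u) : Fin (K n) → Fin (W n u) := ω.1.2.1

/-- Correctness of a dynamic retrieval scheme `(F, G, Query)`: on every realization in
the support of the process, querying `F(A, R_A, R_{B₀})` with a key of `A ∪ B₀` returns
its value, and querying `G(F(A, R_A, R_{B₀}), B, R_B)` with a key of `A ∪ B` returns its
value. -/
def Correct (F : FBuilder n v u) (G : GBuilder n v u) (Q : QueryFn v) : Prop :=
  ∀ ω : DynOmega n v u,
    (∀ i, Q (Frv n v u F ω) (key n u i (ω.1.1.1 i)) = ω.1.1.2.1 i) ∧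
    (∀ i : Fin (K n), Q (Frv n v u F ω) (i : ℕ) = ω.1.1.2.2 i) ∧
    (∀ i, Q (Grv n v u F G ω) (key n u i (ω.1.1.1 i)) = ω.1.1.2.1 i) ∧
    (∀ i, Q (Grv n v u F G ω) (key n u i (ω.1.2.1 i)) = ω.1.2.2 i)

/-- The plausible set `P_i(f)`: all triples `(x, r_x, r_i)` of an element `x` of part
`i`, a `v`-bit value `r_x` with first bit `1`, and a `v`-bit value `r_i`, such that some
realization `(A', R'_{A'}, R'_{B₀})` in the support of `(A, R_A, R_{B₀})` has
`F(A', R'_{A'}, R'_{B₀}) = f`, `x` the element of `A'` in part `i` with value `r_x`, and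
`r_i` the value of the key `i ∈ B₀` in `R'_{B₀}`. -/
def Plausible (F : FBuilder n v u) (f : List Bool) (i : Fin (K n)) :
    Set (Fin (W n u) × (Fin v → Bool) × (Fin v → Bool)) :=
  {p | ∃ d : FData n v u, ValidF n v u d ∧ F d.1 d.2.1 d.2.2 = f ∧
        d.1 i = p.1 ∧ d.2.1 i = p.2.1 ∧ d.2.2 i = p.2.2}

/-- A triple `(x, r_x, r_i) ∈ P_i(f)` *remains feasible after `B`* if the witness
`(A', R'_{A'}, R'_{B₀})` can additionally be chosen with `A' ∩ B = ∅`. -/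
def Feasible (F : FBuilder n v u) (f : List Bool) (i : Fin (K n))
    (B : Fin (K n) → Fin (W n u)) (p : Fin (W n u) × (Fin v → Bool) × (Fin v → Bool)) :
    Prop :=
  ∃ d : FData n v u, ValidF n v u d ∧ F d.1 d.2.1 d.2.2 = f ∧
    d.1 i = p.1 ∧ d.2.1 i = p.2.1 ∧ d.2.2 i = p.2.2 ∧ ∀ j, B j ≠ d.1 j

end DynRetrieval

namespace DynRetrieval

/-!
Every random choice of the process is uniform, so `H(F) = log₂ N − E_a[log₂ N_{F(a)}]`, where
`N` counts the first-stage realizations `a = (A, R_A, R_{B₀})` and `N_f` those with `F(a) = f`.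
A realization is determined by its coordinates in the `n/2` parts, and for `a` in the fiber of
`f` the coordinates in part `i` form a triple of `P_i(f)`; hence `N_f ≤ ∏ᵢ |P_i(f)|` and
`E_{i,a}[log₂ |P_i(F(a))|] ≥ (log₂ N − S)/(n/2)`. AM–GM turns this into
`E_{i,a}|P_i(F(a))| ≥ 2^{(log₂ N − S)/(n/2)}`, and `N = (W · 2^{2v−1})^{n/2}` with
`W = (u − n/2)/(n/2)` makes the right side the claimed bound with `c = 1`.
-/

open Finset Real

section UniformEntropy

variable {Ω Ω' α γ : Type*} [Fintype Ω] [Fintype Ω']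

lemma natCard_setOf_eq_sum_ite (p : Ω → Prop) [DecidablePred p] :
    (Nat.card {ω | p ω} : ℝ) = ∑ ω, if p ω then 1 else 0 := by
  rw [Finset.sum_boole, Nat.card_eq_fintype_card, Fintype.card_subtype]
  rfl

lemma entropy_comp_equiv (e : Ω' ≃ Ω) (X : Ω → γ) : entropy (X ∘ e) = entropy X := by
  have hfiber : ∀ ω', unifPr Ω' {x | X (e x) = X (e ω')} = unifPr Ω {x | X x = X (e ω')} := by
    intro ω'
    rw [unifPr, unifPr, Fintype.card_congr e]
    congr 2
    exact Nat.card_congr (e.subtypeEquiv fun _ => Iff.rfl)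
  simp only [entropy, Function.comp_apply, hfiber, Fintype.card_congr e]
  congr 1
  exact Fintype.sum_equiv e _ _ fun _ => rfl

lemma sum_sigma_fst_of_card_eq {β : α → Type*} [Fintype α] [∀ a, Fintype (β a)] {L : ℕ}
    (hβ : ∀ a, Fintype.card (β a) = L) (g : α → ℝ) :
    ∑ σ : Σ a, β a, g σ.1 = L * ∑ a, g a := by
  simp [Fintype.sum_sigma, hβ, Finset.mul_sum]

lemma entropy_comp_sigma_fst {β : α → Type*} [Fintype α] [∀ a, Fintype (β a)] {L : ℕ}
    (hβ : ∀ a, Fintype.card (β a) = L) (hL : L ≠ 0) (X : α → γ) :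
    entropy (fun σ : Σ a, β a => X σ.1) = entropy X := by
  classical
  have hcard : (Fintype.card (Σ a, β a) : ℝ) = L * Fintype.card α := by
    simpa using sum_sigma_fst_of_card_eq hβ (fun _ => (1 : ℝ))
  have hfiber : ∀ σ : Σ a, β a,
      unifPr (Σ a, β a) {σ' | X σ'.1 = X σ.1} = unifPr α {a | X a = X σ.1} := by
    intro σ
    rw [unifPr, unifPr, natCard_setOf_eq_sum_ite, natCard_setOf_eq_sum_ite,
      sum_sigma_fst_of_card_eq hβ (fun a => if X a = X σ.1 then 1 else 0), hcard,
      mul_div_mul_left _ _ (by exact_mod_cast hL)]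
  simp only [entropy, hfiber]
  rw [sum_sigma_fst_of_card_eq hβ (fun a => -logb 2 (unifPr α {a' | X a' = X a})), hcard,
    mul_div_mul_left _ _ (by exact_mod_cast hL)]

lemma entropy_eq_logb_card_sub (X : Ω → γ) :
    entropy X = logb 2 (Fintype.card Ω)
      - (∑ ω, logb 2 (Nat.card {ω' | X ω' = X ω})) / Fintype.card Ω := by
  rcases isEmpty_or_nonempty Ω with hΩ | hΩ
  · simp [entropy]
  have hN : (Fintype.card Ω : ℝ) ≠ 0 := by positivity
  have hterm : ∀ ω, -logb 2 (unifPr Ω {ω' | X ω' = X ω})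
      = logb 2 (Fintype.card Ω) - logb 2 (Nat.card {ω' | X ω' = X ω}) := by
    intro ω
    have : (Nat.card {ω' | X ω' = X ω} : ℝ) ≠ 0 := by
      have : Nonempty {ω' | X ω' = X ω} := ⟨⟨ω, rfl⟩⟩
      exact_mod_cast Nat.card_pos.ne'
    rw [unifPr, logb_div this hN, neg_sub]
  simp only [entropy, hterm, Finset.sum_sub_distrib, Finset.sum_const, Finset.card_univ,
    nsmul_eq_mul]
  field_simp

end UniformEntropy

lemma two_rpow_avg_logb_le_avg {ι : Type*} [Fintype ι] [Nonempty ι] (x : ι → ℝ)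
    (hx : ∀ i, 0 < x i) :
    (2 : ℝ) ^ ((∑ i, logb 2 (x i)) / Fintype.card ι) ≤ (∑ i, x i) / Fintype.card ι := by
  have amgm := geom_mean_le_arith_mean univ (fun _ => (1 : ℝ)) x (fun _ _ => zero_le_one)
    (by simpa using Fintype.card_pos) (fun i _ => (hx i).le)
  simp only [rpow_one, one_mul, sum_const, card_univ, nsmul_eq_mul, mul_one] at amgm
  rwa [← logb_prod _ _ (fun i _ => (hx i).ne'), div_eq_mul_inv, rpow_mul (by norm_num),
    rpow_logb (by norm_num) (by norm_num) (prod_pos fun i _ => hx i)]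

lemma mul_two_rpow_eq_two_rpow_logb {w S : ℝ} {k v : ℕ} (hw : 0 < w) (hk : 0 < k)
    (hv : 0 < v) :
    w * 2 ^ (-(2 * S - 2 * (2 * k) * v) / (2 * k) - 1)
      = 2 ^ ((logb 2 ((w * (2 ^ (v - 1) * 2 ^ v)) ^ k) - S) / k) := by
  have hlog : logb 2 ((w * (2 ^ (v - 1) * 2 ^ v)) ^ k) = k * (logb 2 w + (2 * v - 1)) := by
    rw [logb_pow, logb_mul hw.ne' (by positivity), ← pow_add, ← rpow_natCast,
      logb_rpow two_pos (by norm_num), Nat.cast_add, Nat.cast_sub hv]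
    ring
  have hexp : (k * (logb 2 w + (2 * v - 1)) - S) / k
      = logb 2 w + (-(2 * S - 2 * (2 * k) * v) / (2 * k) - 1) := by
    field_simp
    ring
  rw [hlog, hexp, rpow_add two_pos, rpow_logb two_pos (by norm_num) hw]

section Model

variable {n v u : ℕ}

lemma card_firstBit_eq (hv : 0 < v) (b : Bool) :
    Fintype.card {r : Fin v → Bool // firstBit r = b} = 2 ^ (v - 1) := by
  obtain ⟨m, rfl⟩ : ∃ m, v = m + 1 := ⟨v - 1, by omega⟩
  have hfirst : ∀ r : Fin (m + 1) → Bool, firstBit r = r 0 := fun r => dif_pos hv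
  let e : {r : Fin (m + 1) → Bool // firstBit r = b} ≃ (Fin m → Bool) :=
    { toFun := fun r => Fin.tail r.1
      invFun := fun t => ⟨Fin.cons b t, by rw [hfirst, Fin.cons_zero]⟩
      left_inv := fun ⟨r, hr⟩ => Subtype.ext <| by
        show Fin.cons b (Fin.tail r) = r
        rw [← hr, hfirst, Fin.cons_self_tail]
      right_inv := fun t => Fin.tail_cons _ _ }
  simp [Fintype.card_congr e]

instance : DecidablePred (ValidF n v u) := fun _ => Fintype.decidableForallFintype

variable (n v u) in
abbrev ValidFData : Type := {d : FData n v u // ValidF n v u d}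

def applyF (F : FBuilder n v u) (d : FData n v u) : List Bool := F d.1 d.2.1 d.2.2

variable (n v u) in
def validFDataEquiv : ValidFData n v u ≃
    (Fin (K n) → Fin (W n u)) × (Fin (K n) → {r : Fin v → Bool // firstBit r = true}) ×
      (Fin (K n) → Fin v → Bool) where
  toFun d := (d.1.1, fun j => ⟨d.1.2.1 j, d.2 j⟩, d.1.2.2)
  invFun x := ⟨(x.1, fun j => (x.2.1 j).1, x.2.2), fun j => (x.2.1 j).2⟩
  left_inv _ := rfl
  right_inv _ := rfl

lemma card_validFData (hv : 0 < v) :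
    Fintype.card (ValidFData n v u) = (W n u * (2 ^ (v - 1) * 2 ^ v)) ^ K n := by
  simp [Fintype.card_congr (validFDataEquiv n v u), card_firstBit_eq hv, mul_pow]

abbrev SecondStage (a : ValidFData n v u) : Type :=
  ((j : Fin (K n)) → {x : Fin (W n u) // x ≠ a.1.1 j}) ×
    {rb : Fin (K n) → Fin v → Bool // ∀ j, firstBit (rb j) = false}

variable (n v u) in
def dynOmegaEquivSigma : DynOmega n v u ≃ Σ a : ValidFData n v u, SecondStage a where
  toFun ω := ⟨⟨ω.1.1, ω.2.1⟩, fun j => ⟨ω.1.2.1 j, ω.2.2.1 j⟩, ⟨ω.1.2.2, ω.2.2.2⟩⟩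
  invFun σ := ⟨(σ.1.1, fun j => (σ.2.1 j).1, σ.2.2.1), σ.1.2, fun j => (σ.2.1 j).2, σ.2.2.2⟩
  left_inv _ := rfl
  right_inv _ := rfl

lemma card_secondStage (hv : 0 < v) (a : ValidFData n v u) :
    Fintype.card (SecondStage a) = ((W n u - 1) * 2 ^ (v - 1)) ^ K n := by
  have hB : ∀ j, Fintype.card {x : Fin (W n u) // x ≠ a.1.1 j} = W n u - 1 := fun j => by
    rw [Fintype.card_subtype_compl, Fintype.card_subtype_eq, Fintype.card_fin]
  rw [Fintype.card_prod, Fintype.card_pi,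
    Fintype.card_congr (Equiv.subtypePiEquivPi (p := fun _ r => firstBit r = false))]
  simp [hB, card_firstBit_eq hv, mul_pow]

/-- `F` only reads the first stage, and every first-stage realization has equally many
continuations, so `H(F)` may be computed on the first stage alone. -/
lemma entropy_Frv (hv : 0 < v) (hW : 2 ≤ W n u) (F : FBuilder n v u) :
    entropy (Frv n v u F) = entropy (fun a : ValidFData n v u => applyF F a.1) := by
  have hL : ((W n u - 1) * 2 ^ (v - 1)) ^ K n ≠ 0 := by
    have : 0 < W n u - 1 := by omega
    positivity
  rw [← entropy_comp_sigma_fst (card_secondStage hv) hL,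
    ← entropy_comp_equiv (dynOmegaEquivSigma n v u)]
  rfl

lemma card_plausible_pos (F : FBuilder n v u) (a : ValidFData n v u) (i : Fin (K n)) :
    0 < Nat.card (Plausible n v u F (applyF F a.1) i) :=
  have : Nonempty (Plausible n v u F (applyF F a.1) i) :=
    ⟨⟨(a.1.1 i, a.1.2.1 i, a.1.2.2 i), a.1, a.2, rfl, rfl, rfl, rfl⟩⟩
  Nat.card_pos

/-- A realization is determined by its coordinates in the parts. -/
lemma card_fiber_le_prod_card_plausible (F : FBuilder n v u) (f : List Bool) :
    Nat.card {a : ValidFData n v u | applyF F a.1 = f}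
      ≤ ∏ i, Nat.card (Plausible n v u F f i) := by
  rw [← Nat.card_pi]
  refine Nat.card_le_card_of_injective
    (fun a i => ⟨(a.1.1.1 i, a.1.1.2.1 i, a.1.1.2.2 i), a.1.1, a.1.2, a.2, rfl, rfl, rfl⟩)
    fun a b hab => ?_
  have hcoord := fun i => Prod.ext_iff.mp (Subtype.ext_iff.mp (congrFun hab i))
  refine Subtype.ext (Subtype.ext (Prod.ext (funext fun i => (hcoord i).1) ?_))
  exact Prod.ext (funext fun i => (Prod.ext_iff.mp (hcoord i).2).1)
    (funext fun i => (Prod.ext_iff.mp (hcoord i).2).2)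

lemma logb_card_sub_entropy_le (hv : 0 < v) (hW : 2 ≤ W n u) (F : FBuilder n v u) :
    logb 2 (Fintype.card (ValidFData n v u)) - entropy (Frv n v u F)
      ≤ (∑ a : ValidFData n v u, ∑ i, logb 2 (Nat.card (Plausible n v u F (applyF F a.1) i)))
        / Fintype.card (ValidFData n v u) := by
  rw [entropy_Frv hv hW, entropy_eq_logb_card_sub, sub_sub_cancel]
  gcongr with a
  have hpos : ∀ i, (0 : ℝ) < Nat.card (Plausible n v u F (applyF F a.1) i) := fun i => by
    exact_mod_cast card_plausible_pos F a i
  rw [← logb_prod _ _ fun i _ => (hpos i).ne']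
  have hfiber : 0 < Nat.card {a' : ValidFData n v u | applyF F a'.1 = applyF F a.1} :=
    have : Nonempty {a' : ValidFData n v u | applyF F a'.1 = applyF F a.1} := ⟨⟨a, rfl⟩⟩
    Nat.card_pos
  refine logb_le_logb_of_le (by norm_num) (by exact_mod_cast hfiber) ?_
  exact_mod_cast card_fiber_le_prod_card_plausible F (applyF F a.1)

lemma two_rpow_le_avg_card_plausible (hv : 0 < v) (hW : 2 ≤ W n u) (hK : 0 < K n)
    (F : FBuilder n v u) {S : ℝ} (hS : entropy (Frv n v u F) ≤ S) :
    (2 : ℝ) ^ ((logb 2 (Fintype.card (ValidFData n v u)) - S) / K n)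
      ≤ (∑ p : Fin (K n) × ValidFData n v u,
          (Nat.card (Plausible n v u F (applyF F p.2.1) p.1) : ℝ))
        / (K n * Fintype.card (ValidFData n v u)) := by
  set x : Fin (K n) × ValidFData n v u → ℝ :=
    fun p => Nat.card (Plausible n v u F (applyF F p.2.1) p.1)
  have hx : ∀ p, 0 < x p := fun p => Nat.cast_pos.mpr (card_plausible_pos F p.2 p.1)
  have : Nonempty (Fin (K n)) := ⟨⟨0, hK⟩⟩
  have : Nonempty (ValidFData n v u) :=
    Fintype.card_pos_iff.mp (by rw [card_validFData hv]; positivity)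
  have hcard : (Fintype.card (Fin (K n) × ValidFData n v u) : ℝ)
      = K n * Fintype.card (ValidFData n v u) := by
    rw [Fintype.card_prod, Fintype.card_fin, Nat.cast_mul]
  have hexp : (logb 2 (Fintype.card (ValidFData n v u)) - S) / K n
      ≤ (∑ p, logb 2 (x p)) / Fintype.card (Fin (K n) × ValidFData n v u) := by
    rw [hcard, mul_comm, ← div_div, Fintype.sum_prod_type, Finset.sum_comm]
    gcongr
    exact (sub_le_sub_left hS _).trans (logb_card_sub_entropy_le hv hW F)
  rw [← hcard]
  exact (rpow_le_rpow_of_exponent_le one_le_two hexp).trans (two_rpow_avg_logb_le_avg x hx)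

namespace Hyp

lemma K_pos (h : Hyp n v u) : 0 < K n := by
  have := h.2.1
  unfold K
  omega

lemma cast_K (h : Hyp n v u) : (K n : ℝ) = n / 2 := by
  rw [K, Nat.cast_div (Nat.dvd_of_mod_eq_zero h.1) two_ne_zero, Nat.cast_ofNat]

lemma two_le_W (h : Hyp n v u) : 2 ≤ W n u := by
  obtain ⟨-, h4, -, hu, -⟩ := h
  have : 2 * n ≤ n ^ 3 := by nlinarith [Nat.pow_succ n 2, Nat.pow_two n]
  rw [W, Nat.le_div_iff_mul_le (by omega)]
  omega

lemma cast_W (h : Hyp n v u) : (W n u : ℝ) = ((u : ℝ) - n / 2) / (n / 2) := by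
  have hle : n / 2 ≤ u := by
    have : n ≤ n ^ 3 := Nat.le_self_pow (by norm_num) n
    have := h.2.2.2.1
    omega
  have hmul : (W n u : ℝ) * K n = u - K n := by
    rw [← Nat.cast_mul, W, K, Nat.div_mul_cancel h.2.2.2.2, Nat.cast_sub hle]
  rw [← h.cast_K, ← hmul, mul_div_cancel_right₀ _ (by exact_mod_cast h.K_pos.ne')]

end Hyp

lemma sum_indicator_validF (g : FData n v u → ℝ) :
    ∑ d, Set.indicator {d | ValidF n v u d} g d = ∑ a : ValidFData n v u, g a.1 := by
  rw [Finset.sum_indicator_eq_sum_filter]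
  exact Finset.sum_subtype _ (by simp) g

end Model

/-- **Claim 4.6.** There is an absolute constant `c > 0` such that for every
deterministic dynamic retrieval scheme `(F, G, Query)` in the model and every real
`S ≥ H(F)`: if `i` is drawn uniformly from `{1, …, n/2}`, independently of the process,
then the expected size of the plausible set satisfies
`E_{i, A, R_A, R_{B₀}}[ |P_i(F(A, R_A, R_{B₀}))| ] ≥ ((u − n/2)/(n/2)) · 2^{−(2S − 2nv)/n − c}`.

(The marginal distribution of `(A, R_A, R_{B₀})` is the uniform distribution on its valid
realizations; the expectation is written out as the corresponding average.) -/
theorem dynamic_plausible_set_expected_size :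
    ∃ c : ℝ, 0 < c ∧
      ∀ n v u : ℕ, Hyp n v u →
      ∀ (F : FBuilder n v u) (G : GBuilder n v u) (Q : QueryFn v),
        Correct n v u F G Q →
      ∀ S : ℝ, entropy (Frv n v u F) ≤ S →
        (((u : ℝ) - (n : ℝ) / 2) / ((n : ℝ) / 2)) *
            2 ^ (-(2 * S - 2 * (n : ℝ) * v) / n - c) ≤
          (∑ i : Fin (K n), ∑ d : FData n v u,
              Set.indicator {d | ValidF n v u d}
                (fun d => (Nat.card (Plausible n v u F (F d.1 d.2.1 d.2.2) i) : ℝ)) d) /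
            ((K n : ℝ) * (Nat.card {d : FData n v u // ValidF n v u d} : ℝ)) := by
  refine ⟨1, one_pos, fun n v u h F _ _ _ S hS => ?_⟩
  have hv : 0 < v := h.2.2.1
  have hW := h.two_le_W
  have hn : (n : ℝ) = 2 * K n := by rw [h.cast_K]; ring
  calc ((u : ℝ) - n / 2) / (n / 2) * 2 ^ (-(2 * S - 2 * n * v) / n - 1)
      = 2 ^ ((logb 2 (Fintype.card (ValidFData n v u)) - S) / K n) := by
        rw [← h.cast_W, hn, card_validFData hv]
        push_cast
        exact mul_two_rpow_eq_two_rpow_logb (by positivity) h.K_pos hv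
    _ ≤ _ := two_rpow_le_avg_card_plausible hv hW h.K_pos F hS
    _ = _ := by
      rw [Fintype.sum_prod_type, Nat.card_eq_fintype_card]
      simp only [sum_indicator_validF]
      rfl

end DynRetrieval
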